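/- arXiv:1802.02705 — 8 statements merged into one kernel-verified Lean document; each statement's English description precedes it below -/
import Mathlib

section
/- Let p be a prime, let k, l be natural numbers with k < p, and let u, v be vectors in ℕ^m with every component of u less than p. Then the multinomial coefficient (k + p·l choose u + p·v) is congruent modulo p to the product of multinomial coefficients (k choose u) · (l choose v), where for a vector w in ℕ^m, (n choose w) denotes n!/(w₁!⋯w_m!) if n equals the sum of the components of w, and 0 otherwise. -/
open scoped BigOperators

/-- The multinomial coefficient `(n choose u) = n!/(u₁!⋯u_m!)` if `n = ‖u‖` (the sum of
the components of `u`), and `0` otherwise. -/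
def vecMultinomial {m : ℕ} (n : ℕ) (u : Fin m → ℕ) : ℕ :=
  if n = ∑ i, u i then Nat.multinomial Finset.univ u else 0

lemma multinomial_univ_succ {m : ℕ} (u : Fin (m + 1) → ℕ) :
    Nat.multinomial Finset.univ u =
      (∑ i, u i).choose (u 0) * Nat.multinomial Finset.univ (Fin.tail u) := by
  have hpos : 0 < ∏ i, Nat.factorial (u i) := Finset.prod_pos fun i _ => Nat.factorial_pos _
  apply Nat.eq_of_mul_eq_mul_left hpos
  rw [Nat.multinomial_spec]
  have hsum : ∑ i, u i = u 0 + ∑ i, Fin.tail u i := Fin.sum_univ_succ u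
  have hprod : ∏ i, Nat.factorial (u i) = Nat.factorial (u 0) * ∏ i, Nat.factorial (Fin.tail u i) := Fin.prod_univ_succ _
  have hspec : (∏ i, Nat.factorial (Fin.tail u i)) * Nat.multinomial Finset.univ (Fin.tail u)
      = Nat.factorial (∑ i, Fin.tail u i) := Nat.multinomial_spec _ _
  have hchoose : (u 0 + ∑ i, Fin.tail u i).choose (u 0) * Nat.factorial (u 0) * Nat.factorial (∑ i, Fin.tail u i)
      = Nat.factorial (u 0 + ∑ i, Fin.tail u i) := by
    have := Nat.choose_mul_factorial_mul_factorial
      (Nat.le_add_right (u 0) (∑ i, Fin.tail u i))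
    simpa using this
  rw [hprod, hsum]
  symm
  calc Nat.factorial (u 0) * (∏ i, Nat.factorial (Fin.tail u i)) *
        ((u 0 + ∑ i, Fin.tail u i).choose (u 0) * Nat.multinomial Finset.univ (Fin.tail u))
      = (u 0 + ∑ i, Fin.tail u i).choose (u 0) * Nat.factorial (u 0) *
        ((∏ i, Nat.factorial (Fin.tail u i)) * Nat.multinomial Finset.univ (Fin.tail u)) := by ring
    _ = Nat.factorial (u 0 + ∑ i, Fin.tail u i) := by rw [hspec, ← hchoose]

lemma vecMultinomial_succ {m : ℕ} (n : ℕ) (u : Fin (m + 1) → ℕ) :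
    vecMultinomial n u = n.choose (u 0) * vecMultinomial (n - u 0) (Fin.tail u) := by
  unfold vecMultinomial
  rcases le_or_gt (u 0) n with h | h
  · have hsum : ∑ i, u i = u 0 + ∑ i, Fin.tail u i := Fin.sum_univ_succ u
    by_cases hn : n = ∑ i, u i
    · rw [if_pos hn, if_pos (by omega), multinomial_univ_succ, ← hn]
    · rw [if_neg hn, if_neg (by omega), mul_zero]
  · rw [Nat.choose_eq_zero_of_lt h, zero_mul]
    have hsum : ∑ i, u i = u 0 + ∑ i, Fin.tail u i := Fin.sum_univ_succ u
    rw [if_neg (by omega)]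

theorem stmt_0 {m : ℕ} (p : ℕ) (hp : p.Prime) (k l : ℕ) (hk : k < p)
    (u v : Fin m → ℕ) (hu : ∀ i, u i < p) :
    vecMultinomial (k + p * l) (u + p • v) ≡
      vecMultinomial k u * vecMultinomial l v [MOD p] := by
  haveI : Fact p.Prime := ⟨hp⟩
  induction m generalizing k l with
  | zero =>
      simp only [vecMultinomial, Finset.univ_eq_empty, Finset.sum_empty,
        Nat.multinomial_empty]
      have hp0 : 0 < p := hp.pos
      have : k + p * l = 0 ↔ (k = 0 ∧ l = 0) := by
        constructor
        · intro h; constructor <;> nlinarith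
        · rintro ⟨h1, h2⟩; simp [h1, h2]
      by_cases h : k + p * l = 0
      · rw [if_pos h, if_pos (this.mp h).1, if_pos (this.mp h).2]
      · rw [if_neg h]
        rcases Decidable.not_and_iff_or_not.mp (h ∘ this.mpr) with h1 | h1
        · rw [if_neg h1, zero_mul]
        · rw [if_neg h1, mul_zero]
  | succ m ih =>
      rw [vecMultinomial_succ, vecMultinomial_succ k, vecMultinomial_succ l]
      have hmod : (k + p * l) % p = k := by
        rw [Nat.add_mul_mod_self_left, Nat.mod_eq_of_lt hk]
      have hdiv : (k + p * l) / p = l := by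
        rw [Nat.add_mul_div_left _ _ hp.pos, Nat.div_eq_of_lt hk, zero_add]
      have hu0 : (u + p • v) 0 = u 0 + p * v 0 := rfl
      have humod : (u 0 + p * v 0) % p = u 0 := by
        rw [Nat.add_mul_mod_self_left, Nat.mod_eq_of_lt (hu 0)]
      have hudiv : (u 0 + p * v 0) / p = v 0 := by
        rw [Nat.add_mul_div_left _ _ hp.pos, Nat.div_eq_of_lt (hu 0), zero_add]
      have hlucas : (k + p * l).choose (u 0 + p * v 0) ≡
          k.choose (u 0) * l.choose (v 0) [MOD p] := by
        have := Choose.choose_modEq_choose_mod_mul_choose_div_nat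
          (n := k + p * l) (k := u 0 + p * v 0) (p := p)
        rwa [hmod, hdiv, humod, hudiv] at this
      have htail : Fin.tail (u + p • v) = Fin.tail u + p • Fin.tail v := rfl
      rcases lt_or_ge k (u 0) with hcase | hcase
      · -- k < u 0 : both sides ≡ 0
        rw [Nat.choose_eq_zero_of_lt hcase, zero_mul, zero_mul]
        calc (k + p * l).choose ((u + p • v) 0) *
              vecMultinomial (k + p * l - (u + p • v) 0) (Fin.tail (u + p • v))
            ≡ k.choose (u 0) * l.choose (v 0) *
              vecMultinomial (k + p * l - (u + p • v) 0) (Fin.tail (u + p • v)) [MOD p] := by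
              rw [hu0]; exact Nat.ModEq.mul_right _ hlucas
          _ = 0 := by rw [Nat.choose_eq_zero_of_lt hcase]; ring
      rcases lt_or_ge l (v 0) with hcase2 | hcase2
      · -- l < v 0 : both sides ≡ 0
        rw [Nat.choose_eq_zero_of_lt hcase2, zero_mul, mul_zero]
        calc (k + p * l).choose ((u + p • v) 0) *
              vecMultinomial (k + p * l - (u + p • v) 0) (Fin.tail (u + p • v))
            ≡ k.choose (u 0) * l.choose (v 0) *
              vecMultinomial (k + p * l - (u + p • v) 0) (Fin.tail (u + p • v)) [MOD p] := by
              rw [hu0]; exact Nat.ModEq.mul_right _ hlucas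
          _ = 0 := by rw [Nat.choose_eq_zero_of_lt hcase2]; ring
      · -- main case
        have hsub : k + p * l - (u 0 + p * v 0) = (k - u 0) + p * (l - v 0) := by
          have h1 : p * v 0 ≤ p * l := Nat.mul_le_mul_left p hcase2
          have h2 : p * (l - v 0) = p * l - p * v 0 := Nat.mul_sub_left_distrib p l (v 0)
          omega
        have hih : vecMultinomial ((k - u 0) + p * (l - v 0))
              (Fin.tail u + p • Fin.tail v) ≡
            vecMultinomial (k - u 0) (Fin.tail u) *
              vecMultinomial (l - v 0) (Fin.tail v) [MOD p] :=
          ih (k - u 0) (l - v 0) (lt_of_le_of_lt (Nat.sub_le _ _) hk)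
            (Fin.tail u) (Fin.tail v) (fun i => hu i.succ)
        calc (k + p * l).choose ((u + p • v) 0) *
              vecMultinomial (k + p * l - (u + p • v) 0) (Fin.tail (u + p • v))
            ≡ (k.choose (u 0) * l.choose (v 0)) *
              (vecMultinomial (k - u 0) (Fin.tail u) *
                vecMultinomial (l - v 0) (Fin.tail v)) [MOD p] := by
              rw [hu0, htail, hsub]; exact Nat.ModEq.mul hlucas hih
          _ = k.choose (u 0) * vecMultinomial (k - u 0) (Fin.tail u) *
              (l.choose (v 0) * vecMultinomial (l - v 0) (Fin.tail v)) := by ring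
end

section
/- Let p be a prime and u ∈ ℕ^m. Write the base-p expansions ‖u‖ = k₀ + k₁p + ⋯ + k_r p^r with 0 ≤ k_i < p, and u = u₀ + p·u₁ + ⋯ + p^r·u_r with each vector u_i having all components less than p. Then the multinomial coefficient (‖u‖ choose u) is congruent modulo p to the product (k₀ choose u₀)(k₁ choose u₁)⋯(k_r choose u_r). In particular, (‖u‖ choose u) ≢ 0 mod p if and only if ‖u_i‖ = k_i for each i. -/
open scoped BigOperators

open Finset MvPolynomial

variable {m p : ℕ}

noncomputable def nu {m : ℕ} (u : Fin m → ℕ) : Fin m →₀ ℕ := Finsupp.equivFunOnFinite.symm u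

lemma nu_apply (u : Fin m → ℕ) (j : Fin m) : nu u j = u j := rfl

lemma nu_inj : Function.Injective (nu (m := m)) := Finsupp.equivFunOnFinite.symm.injective

lemma monomial_prod {R : Type*} [CommSemiring R] (w : Fin m → ℕ) :
    (∏ j, (X j : MvPolynomial (Fin m) R) ^ w j) = monomial (nu w) 1 := by
  rw [← prod_X_pow_eq_monomial]
  refine (Finset.prod_subset (Finset.subset_univ _) ?_).symm
  intro j _ hj
  have h0 : w j = 0 := by simpa [nu_apply] using hj
  simp [nu_apply, h0]

lemma expand_pow (R : Type*) [CommSemiring R] (q n : ℕ) :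
    ((∑ j : Fin m, X j ^ q : MvPolynomial (Fin m) R)) ^ n =
      ∑ v ∈ piAntidiag (univ : Finset (Fin m)) n,
        monomial (nu (fun j => q * v j)) ((Nat.multinomial univ v : R)) := by
  rw [Finset.sum_pow_eq_sum_piAntidiag]
  refine Finset.sum_congr rfl fun v hv => ?_
  have : ∏ i : Fin m, ((X i : MvPolynomial (Fin m) R) ^ q) ^ v i
      = monomial (nu (fun j => q * v j)) 1 := by
    rw [← monomial_prod]
    exact Finset.prod_congr rfl fun j _ => by rw [← pow_mul]
  rw [this]
  rw [show ((Nat.multinomial univ v : MvPolynomial (Fin m) R)) = C ((Nat.multinomial univ v : R)) by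
    simp [MvPolynomial.C_eq_coe_nat], C_mul_monomial, mul_one]

lemma coeff_expand (R : Type*) [CommSemiring R] (q n : ℕ) (u : Fin m → ℕ) :
    coeff (nu u) ((∑ j : Fin m, X j ^ q : MvPolynomial (Fin m) R) ^ n) =
      ∑ v ∈ piAntidiag (univ : Finset (Fin m)) n,
        if (fun j => q * v j) = u then (Nat.multinomial univ v : R) else 0 := by
  rw [expand_pow, coeff_sum]
  refine Finset.sum_congr rfl fun v hv => ?_
  rw [coeff_monomial]
  congr 1
  simp [nu_inj.eq_iff]

lemma coeff_one_pow (R : Type*) [CommSemiring R] (n : ℕ) (u : Fin m → ℕ) :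
    coeff (nu u) ((∑ j : Fin m, X j ^ 1 : MvPolynomial (Fin m) R) ^ n) =
      (vecMultinomial n u : R) := by
  rw [coeff_expand]
  simp only [one_mul]
  rw [Finset.sum_ite_eq' (piAntidiag (univ : Finset (Fin m)) n) u
    (fun v => (Nat.multinomial univ v : R))]
  simp only [mem_piAntidiag, vecMultinomial]
  split_ifs with h1 h2 h2 <;> simp_all [eq_comm]

lemma nu_add (a b : Fin m → ℕ) : nu a + nu b = nu (fun j => a j + b j) := by
  ext j; simp [nu_apply, Finsupp.add_apply]

lemma step_lemma (hp : p.Prime) (n : ℕ) (u : Fin m → ℕ) :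
    (vecMultinomial n u : ZMod p) =
      (vecMultinomial (n % p) (fun j => u j % p) : ZMod p) *
        (vecMultinomial (n / p) (fun j => u j / p) : ZMod p) := by
  haveI : Fact p.Prime := ⟨hp⟩
  have hp0 : 0 < p := hp.pos
  have key : ((∑ j : Fin m, X j ^ 1 : MvPolynomial (Fin m) (ZMod p))) ^ n =
      (∑ j : Fin m, X j ^ 1) ^ (n % p) * (∑ j : Fin m, X j ^ p) ^ (n / p) := by
    have h1 : ((∑ j : Fin m, X j ^ 1 : MvPolynomial (Fin m) (ZMod p))) ^ p
        = ∑ j : Fin m, X j ^ p := by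
      rw [sum_pow_char]
      exact Finset.sum_congr rfl fun j _ => by rw [← pow_mul, one_mul]
    rw [← h1, ← pow_mul, ← pow_add, Nat.mod_add_div]
  have h := congrArg (coeff (nu u)) key
  rw [coeff_one_pow, expand_pow, expand_pow, Finset.sum_mul_sum] at h
  simp only [monomial_mul, nu_add, coeff_sum, coeff_monomial, nu_inj.eq_iff, one_mul] at h
  set P₁ := piAntidiag (univ : Finset (Fin m)) (n % p) with hP₁
  set P₂ := piAntidiag (univ : Finset (Fin m)) (n / p) with hP₂
  have h_iff : ∀ x ∈ P₁ ×ˢ P₂,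
      ((fun j => x.1 j + p * x.2 j) = u) ↔
        x = ((fun j => u j % p : Fin m → ℕ), (fun j => u j / p : Fin m → ℕ)) := by
    rintro ⟨v, w⟩ hx
    simp only [mem_product, hP₁, hP₂, mem_piAntidiag] at hx
    constructor
    · intro hvw
      have hlt : ∀ j, v j < p := fun j =>
        lt_of_le_of_lt
          (le_trans (Finset.single_le_sum (fun i _ => Nat.zero_le (v i)) (mem_univ j))
            (le_of_eq hx.1.1)) (Nat.mod_lt n hp0)
      have h1 : ∀ j, u j % p = v j := fun j => by
        rw [← congrFun hvw j]; simp [Nat.add_mul_mod_self_left, Nat.mod_eq_of_lt (hlt j)]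
      have h2 : ∀ j, u j / p = w j := fun j => by
        rw [← congrFun hvw j, Nat.add_mul_div_left _ _ hp0, Nat.div_eq_of_lt (hlt j), zero_add]
      exact Prod.ext (funext fun j => (h1 j).symm) (funext fun j => (h2 j).symm)
    · intro h'
      obtain ⟨h1, h2⟩ := Prod.mk.inj h'
      subst h1; subst h2
      exact funext fun j => Nat.mod_add_div (u j) p
  rw [← Finset.sum_product'] at h
  rw [Finset.sum_congr rfl (fun x hx => if_congr (h_iff x hx) rfl rfl),
    Finset.sum_ite_eq' (P₁ ×ˢ P₂)] at h
  rw [h]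
  by_cases hmem : ((fun j => u j % p : Fin m → ℕ), (fun j => u j / p : Fin m → ℕ)) ∈ P₁ ×ˢ P₂
  · rw [if_pos hmem]
    simp only [mem_product, hP₁, hP₂, mem_piAntidiag] at hmem
    simp [vecMultinomial, hmem.1.1.symm, hmem.2.1.symm]
  · rw [if_neg hmem]
    simp only [mem_product, hP₁, hP₂, mem_piAntidiag, mem_univ, ne_eq, implies_true, and_true,
      not_and_or] at hmem
    rcases hmem with h1 | h2
    · rw [show (vecMultinomial (n % p) fun j => u j % p) = 0 from
        if_neg (fun hc => h1 hc.symm)]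
      simp
    · rw [show (vecMultinomial (n / p) fun j => u j / p) = 0 from
        if_neg (fun hc => h2 hc.symm)]
      simp

lemma step_modEq (hp : p.Prime) (n : ℕ) (u : Fin m → ℕ) :
    vecMultinomial n u ≡
      vecMultinomial (n % p) (fun j => u j % p) *
        vecMultinomial (n / p) (fun j => u j / p) [MOD p] := by
  haveI : Fact p.Prime := ⟨hp⟩
  rw [← ZMod.natCast_eq_natCast_iff]
  push_cast
  exact step_lemma hp n u

lemma main_lemma (hp : p.Prime) : ∀ (r : ℕ) (u : Fin m → ℕ) (k : ℕ → ℕ) (U : ℕ → Fin m → ℕ),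
    (∀ i, k i < p) → (∀ i j, U i j < p) →
    (∑ j, u j = ∑ i ∈ Finset.range (r + 1), k i * p ^ i) →
    (u = ∑ i ∈ Finset.range (r + 1), p ^ i • U i) →
    Nat.multinomial Finset.univ u ≡
      ∏ i ∈ Finset.range (r + 1), vecMultinomial (k i) (U i) [MOD p] := by
  intro r
  induction r with
  | zero =>
    intro u k U hk hU hnorm hdig
    simp only [zero_add, Finset.range_one, Finset.sum_singleton, Finset.prod_singleton, pow_zero,
      mul_one, one_smul] at hnorm hdig
    subst hdig
    rw [show (∏ i ∈ Finset.range (0 + 1), vecMultinomial (k i) (U i)) = vecMultinomial (k 0) (U 0)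
      by simp]
    rw [show vecMultinomial (k 0) (U 0) = Nat.multinomial Finset.univ (U 0) from
      if_pos hnorm.symm]
  | succ r ih =>
    intro u k U hk hU hnorm hdig
    have hp0 : 0 < p := hp.pos
    have hu : ∀ j, u j = U 0 j + p * ∑ i ∈ range (r + 1), p ^ i * U (i + 1) j := by
      intro j
      calc u j = ∑ i ∈ range (r + 2), p ^ i * U i j := by
            simpa [Finset.sum_apply] using congrFun hdig j
        _ = (∑ i ∈ range (r + 1), p ^ (i + 1) * U (i + 1) j) + p ^ 0 * U 0 j :=
            Finset.sum_range_succ' _ _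
        _ = U 0 j + p * ∑ i ∈ range (r + 1), p ^ i * U (i + 1) j := by
            rw [Finset.mul_sum, add_comm, pow_zero, one_mul]
            congr 1
            exact Finset.sum_congr rfl fun i _ => by ring
    have hn : ∑ j, u j = k 0 + p * ∑ i ∈ range (r + 1), k (i + 1) * p ^ i := by
      rw [hnorm]
      calc ∑ i ∈ range (r + 2), k i * p ^ i
          = (∑ i ∈ range (r + 1), k (i + 1) * p ^ (i + 1)) + k 0 * p ^ 0 :=
            Finset.sum_range_succ' _ _
        _ = k 0 + p * ∑ i ∈ range (r + 1), k (i + 1) * p ^ i := by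
            rw [Finset.mul_sum, add_comm, pow_zero, mul_one]
            congr 1
            exact Finset.sum_congr rfl fun i _ => by ring
    set N := ∑ j, u j with hN
    have hmod : N % p = k 0 := by
      rw [hn, Nat.add_mul_mod_self_left, Nat.mod_eq_of_lt (hk 0)]
    have hdiv : N / p = ∑ i ∈ range (r + 1), k (i + 1) * p ^ i := by
      rw [hn, Nat.add_mul_div_left _ _ hp0, Nat.div_eq_of_lt (hk 0), zero_add]
    have humod : (fun j => u j % p) = U 0 := by
      funext j
      rw [hu j, Nat.add_mul_mod_self_left, Nat.mod_eq_of_lt (hU 0 j)]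
    have hudiv : ∀ j, u j / p = ∑ i ∈ range (r + 1), p ^ i * U (i + 1) j := by
      intro j
      rw [hu j, Nat.add_mul_div_left _ _ hp0, Nat.div_eq_of_lt (hU 0 j), zero_add]
    have hstep := step_modEq hp N u
    rw [show vecMultinomial N u = Nat.multinomial Finset.univ u from if_pos hN,
      hmod, humod] at hstep
    by_cases hA : N / p = ∑ j, u j / p
    · have hveq : vecMultinomial (N / p) (fun j => u j / p) =
          Nat.multinomial Finset.univ (fun j => u j / p) := if_pos hA
      rw [hveq] at hstep
      have ihh := ih (fun j => u j / p) (fun i => k (i + 1)) (fun i => U (i + 1))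
        (fun i => hk (i + 1)) (fun i j => hU (i + 1) j)
        (by rw [← hA, hdiv]) (by funext j; simpa [Finset.sum_apply] using hudiv j)
      rw [Finset.prod_range_succ']
      calc Nat.multinomial Finset.univ u
          ≡ vecMultinomial (k 0) (U 0) * Nat.multinomial Finset.univ (fun j => u j / p)
            [MOD p] := hstep
        _ ≡ vecMultinomial (k 0) (U 0) *
            ∏ i ∈ range (r + 1), vecMultinomial (k (i + 1)) (U (i + 1)) [MOD p] :=
            (Nat.ModEq.refl _).mul ihh
        _ = (∏ i ∈ range (r + 1), vecMultinomial (k (i + 1)) (U (i + 1))) *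
            vecMultinomial (k 0) (U 0) := mul_comm _ _
    · have hbad : ¬ ∀ i ∈ range (r + 1), ∑ j, U (i + 1) j = k (i + 1) := by
        intro hall
        apply hA
        rw [hdiv]
        calc ∑ i ∈ range (r + 1), k (i + 1) * p ^ i
            = ∑ i ∈ range (r + 1), p ^ i * ∑ j, U (i + 1) j :=
              Finset.sum_congr rfl fun i hi => by rw [hall i hi]; ring
          _ = ∑ j, ∑ i ∈ range (r + 1), p ^ i * U (i + 1) j := by
              rw [Finset.sum_comm]
              exact Finset.sum_congr rfl fun i _ => by rw [Finset.mul_sum]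
          _ = ∑ j, u j / p := by
              exact Finset.sum_congr rfl fun j _ => (hudiv j).symm
      push_neg at hbad
      obtain ⟨i, hi, hne⟩ := hbad
      have hz : vecMultinomial (k (i + 1)) (U (i + 1)) = 0 :=
        if_neg fun hc => hne hc.symm
      have hprod : ∏ i ∈ range (r + 2), vecMultinomial (k i) (U i) = 0 :=
        Finset.prod_eq_zero (Finset.mem_range.mpr (Nat.succ_lt_succ (Finset.mem_range.mp hi))) hz
      rw [hprod]
      have hz' : vecMultinomial (N / p) (fun j => u j / p) = 0 :=
        if_neg fun hc => hA hc
      rw [hz', mul_zero] at hstep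
      exact hstep

theorem stmt_1 {m : ℕ} (p : ℕ) (hp : p.Prime) (u : Fin m → ℕ) (r : ℕ)
    (k : ℕ → ℕ) (U : ℕ → Fin m → ℕ)
    (hk : ∀ i, k i < p) (hU : ∀ i j, U i j < p)
    (hnorm : ∑ j, u j = ∑ i ∈ Finset.range (r + 1), k i * p ^ i)
    (hdig : u = ∑ i ∈ Finset.range (r + 1), p ^ i • U i) :
    (Nat.multinomial Finset.univ u ≡
        ∏ i ∈ Finset.range (r + 1), vecMultinomial (k i) (U i) [MOD p]) ∧
      (¬ (p ∣ Nat.multinomial Finset.univ u) ↔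
        ∀ i ∈ Finset.range (r + 1), ∑ j, U i j = k i) := by
  have hmain := main_lemma hp r u k U hk hU hnorm hdig
  refine ⟨hmain, ?_⟩
  have hdvd_iff : p ∣ Nat.multinomial Finset.univ u ↔
      p ∣ ∏ i ∈ Finset.range (r + 1), vecMultinomial (k i) (U i) := by
    rw [← Nat.modEq_zero_iff_dvd, ← Nat.modEq_zero_iff_dvd]
    exact ⟨hmain.symm.trans, hmain.trans⟩
  have hfac : ∀ i, (p ∣ vecMultinomial (k i) (U i)) ↔ ¬ (∑ j, U i j = k i) := by
    intro i
    constructor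
    · intro hdvd hsum
      rw [show vecMultinomial (k i) (U i) = Nat.multinomial Finset.univ (U i) from
        if_pos hsum.symm] at hdvd
      have h1 : Nat.multinomial Finset.univ (U i) ∣ Nat.factorial (∑ j, U i j) :=
        ⟨∏ j, Nat.factorial (U i j), by rw [mul_comm]; exact (Nat.multinomial_spec _ _).symm⟩
      have h2 : p ∣ Nat.factorial (∑ j, U i j) := dvd_trans hdvd h1
      have h3 : p ≤ ∑ j, U i j := (Nat.Prime.dvd_factorial hp).mp h2
      rw [hsum] at h3
      exact absurd (hk i) (not_lt.mpr h3)
    · intro hne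
      rw [show vecMultinomial (k i) (U i) = 0 from if_neg fun hc => hne hc.symm]
      exact dvd_zero p
  rw [hdvd_iff, Nat.Prime.prime hp |>.dvd_finset_prod_iff]
  push_neg
  constructor
  · intro h i hi
    by_contra hne
    exact absurd ((hfac i).mpr hne) (h i hi)
  · intro h i hi
    rw [hfac i]
    exact not_not.mpr (h i hi)
end

section
/- Let R be a commutative ring of prime characteristic p and 𝔞 an ideal of R. Define the k-th Frobenius power 𝔞^[k] for k ∈ ℕ by writing k = k₀ + k₁p + ⋯ + k_r p^r in base p and setting 𝔞^[k] = 𝔞^{k₀} · (𝔞^[p])^{k₁} · ⋯ · (𝔞^[p^r])^{k_r}, where 𝔞^[q] for q a power of p is the ideal generated by q-th powers of elements of 𝔞. Then 𝔞^[k] ⊆ 𝔞^k, and equality holds if 𝔞 is principal. -/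
open scoped BigOperators

/-- The `q`-th bracket power of an ideal: the ideal generated by `q`-th powers
of elements of `a`. -/
def bracketPow {R : Type*} [CommRing R] (a : Ideal R) (q : ℕ) : Ideal R :=
  Ideal.span ((fun x => x ^ q) '' (a : Set R))

/-- The generalized `k`-th Frobenius power of an ideal, defined via the base-`p`
digits of `k`:  `𝔞^[k] = ∏ᵢ (𝔞^[pⁱ])^(kᵢ)` where `kᵢ = k / pⁱ % p` is the `i`-th
base-`p` digit of `k` (digits with index `> k` vanish, so the product below suffices). -/
def frobPow {R : Type*} [CommRing R] (p : ℕ) (a : Ideal R) (k : ℕ) : Ideal R :=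
  ∏ i ∈ Finset.range (k + 1), bracketPow a (p ^ i) ^ (k / p ^ i % p)

/-! Since `𝔞^[q] ⊆ 𝔞^q`, with equality when `𝔞 = (x)` because `x^q` generates both sides,
`𝔞^[k]` is contained in `∏ᵢ (𝔞^(pⁱ))^(kᵢ) = 𝔞^(∑ᵢ kᵢ pⁱ) = 𝔞^k`, with equality for principal `𝔞`. -/

open Finset

namespace Nat

theorem sum_range_pow_mul_div_pow_mod (p k n : ℕ) :
    ∑ i ∈ range n, p ^ i * (k / p ^ i % p) = k % p ^ n := by
  induction n with
  | zero => simp [Nat.mod_one]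
  | succ n ih =>
    have digit : k / p ^ n % p = k % p ^ (n + 1) / p ^ n := by
      rw [pow_succ, Nat.mod_mul_right_div_self]
    have low : k % p ^ (n + 1) % p ^ n = k % p ^ n :=
      Nat.mod_mod_of_dvd _ (pow_dvd_pow p n.le_succ)
    rw [sum_range_succ, ih, digit, ← low, mul_comm]
    exact Nat.mod_add_div' _ _

theorem sum_range_succ_pow_mul_div_pow_mod_self {p : ℕ} (hp : 1 < p) (k : ℕ) :
    ∑ i ∈ range (k + 1), p ^ i * (k / p ^ i % p) = k := by
  rw [sum_range_pow_mul_div_pow_mod]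
  exact Nat.mod_eq_of_lt ((Nat.lt_pow_self hp).trans_le (pow_le_pow_right₀ hp.le k.le_succ))

end Nat

theorem prod_range_succ_pow_pow_div_pow_mod {M : Type*} [CommMonoid M] {p : ℕ} (hp : 1 < p)
    (x : M) (k : ℕ) : ∏ i ∈ range (k + 1), (x ^ p ^ i) ^ (k / p ^ i % p) = x ^ k := by
  simp only [← pow_mul]
  rw [prod_pow_eq_pow_sum, Nat.sum_range_succ_pow_mul_div_pow_mod_self hp]

section

variable {R : Type*} [CommRing R]

theorem bracketPow_le_pow (a : Ideal R) (q : ℕ) : bracketPow a q ≤ a ^ q := by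
  rw [bracketPow, Ideal.span_le]
  rintro _ ⟨x, hx, rfl⟩
  exact Ideal.pow_mem_pow hx q

theorem bracketPow_eq_pow_of_isPrincipal {a : Ideal R} (ha : a.IsPrincipal) (q : ℕ) :
    bracketPow a q = a ^ q := by
  refine le_antisymm (bracketPow_le_pow a q) ?_
  obtain ⟨x, rfl⟩ := ha
  rw [Ideal.submodule_span_eq, Ideal.span_singleton_pow, Ideal.span_le,
    Set.singleton_subset_iff]
  exact Ideal.subset_span ⟨x, Ideal.mem_span_singleton_self x, rfl⟩

theorem frobPow_le_pow {p : ℕ} (hp : 1 < p) (a : Ideal R) (k : ℕ) : frobPow p a k ≤ a ^ k := by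
  calc frobPow p a k ≤ ∏ i ∈ range (k + 1), (a ^ p ^ i) ^ (k / p ^ i % p) := by
        unfold frobPow
        gcongr with i
        exact bracketPow_le_pow a _
    _ = a ^ k := prod_range_succ_pow_pow_div_pow_mod hp a k

theorem frobPow_eq_pow_of_isPrincipal {p : ℕ} (hp : 1 < p) {a : Ideal R} (ha : a.IsPrincipal)
    (k : ℕ) : frobPow p a k = a ^ k := by
  simp only [frobPow, bracketPow_eq_pow_of_isPrincipal ha]
  exact prod_range_succ_pow_pow_div_pow_mod hp a k

end

theorem stmt_2_general {R : Type*} [CommRing R] (p : ℕ) (hp : p.Prime)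
    (a : Ideal R) (k : ℕ) :
    frobPow p a k ≤ a ^ k ∧ (a.IsPrincipal → frobPow p a k = a ^ k) :=
  ⟨frobPow_le_pow hp.one_lt a k, fun ha => frobPow_eq_pow_of_isPrincipal hp.one_lt ha k⟩

theorem stmt_2 {R : Type*} [CommRing R] (p : ℕ) (hp : p.Prime) [CharP R p]
    (a : Ideal R) (k : ℕ) :
    frobPow p a k ≤ a ^ k ∧ (a.IsPrincipal → frobPow p a k = a ^ k) :=
  stmt_2_general p hp a k
end

section
/- Let R be a commutative ring of prime characteristic p, let 𝔞 and 𝔟 be ideals of R, and let k ∈ ℕ. Then (𝔞𝔟)^[k] = 𝔞^[k] · 𝔟^[k], where [k] denotes the k-th generalized Frobenius power defined via the base-p expansion of k. -/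
open scoped BigOperators

section ExpChar

variable {R : Type*} [CommRing R] (p : ℕ) [ExpChar R p]

theorem bracketPow_pow_eq_map_iterateFrobenius (a : Ideal R) (n : ℕ) :
    bracketPow a (p ^ n) = a.map (iterateFrobenius R p n) := by
  simp only [bracketPow, Ideal.map, iterateFrobenius_def]
  rfl

theorem bracketPow_mul_of_expChar (a b : Ideal R) (n : ℕ) :
    bracketPow (a * b) (p ^ n) = bracketPow a (p ^ n) * bracketPow b (p ^ n) := by
  simp only [bracketPow_pow_eq_map_iterateFrobenius, Ideal.map_mul]

theorem frobPow_mul_of_expChar (a b : Ideal R) (k : ℕ) :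
    frobPow p (a * b) k = frobPow p a k * frobPow p b k := by
  simp only [frobPow, bracketPow_mul_of_expChar, mul_pow, Finset.prod_mul_distrib]

end ExpChar

theorem stmt_3 {R : Type*} [CommRing R] (p : ℕ) (hp : p.Prime) [CharP R p]
    (a b : Ideal R) (k : ℕ) :
    frobPow p (a * b) k = frobPow p a k * frobPow p b k :=
  have : Fact p.Prime := ⟨hp⟩
  frobPow_mul_of_expChar p a b k
end

section
/- Let R be a commutative ring of prime characteristic p, 𝔞 an ideal of R, and k > l natural numbers. Then 𝔞^[k] ⊆ 𝔞^[l], where [·] denotes the generalized Frobenius power defined via base-p expansions. -/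
open scoped BigOperators

/-!
Write `I i = 𝔞^[pⁱ]`, so that `𝔞^[k] = ∏ᵢ (I i)^(kᵢ)` and `I (i + 1) ≤ (I i)^p`.
Passing from `k` to `k + 1` either raises the lowest digit by one, which multiplies the product
by `I 0`, or turns a run of digits `p - 1` into zeros and raises the next digit; in that case
`I (i + 1) ≤ (I i)^p` lets the new factor absorb the lost ones, again at the cost of a factor
`I 0`. Hence `𝔞^[k + 1] ≤ 𝔞 * 𝔞^[k] ≤ 𝔞^[k]`.
-/

def digitProd {M : Type*} [CommMonoid M] (p : ℕ) (x : ℕ → M) (N k : ℕ) : M :=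
  ∏ i ∈ Finset.range N, x i ^ (k / p ^ i % p)

section

variable {M : Type*} [CommMonoid M] {p : ℕ}

theorem digitProd_succ_add_mul (x : ℕ → M) (N : ℕ) {r : ℕ} (hr : r < p) (q : ℕ) :
    digitProd p x (N + 1) (r + p * q) = x 0 ^ r * digitProd p (fun i => x (i + 1)) N q := by
  have hp : 0 < p := by omega
  rw [digitProd, Finset.prod_range_succ', mul_comm, digitProd]
  congr 1
  · rw [pow_zero, Nat.div_one, Nat.add_mul_mod_self_left, Nat.mod_eq_of_lt hr]
  · refine Finset.prod_congr rfl fun i _ => ?_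
    rw [pow_succ', ← Nat.div_div_eq_div_mul, Nat.add_mul_div_left _ _ hp, Nat.div_eq_of_lt hr,
      Nat.zero_add]

theorem digitProd_eq_of_lt_pow (x : ℕ → M) (hp : 0 < p) {N N' k : ℕ} (hN : N ≤ N')
    (hk : k < p ^ N) : digitProd p x N' k = digitProd p x N k := by
  refine (Finset.prod_subset (Finset.range_subset_range.2 hN) fun i _ hi => ?_).symm
  have hki : k < p ^ i :=
    hk.trans_le (Nat.pow_le_pow_right hp (by simpa using hi))
  rw [Nat.div_eq_of_lt hki, Nat.zero_mod, pow_zero]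

theorem digitProd_succ_le [Preorder M] [MulRightMono M] {N : ℕ} :
    ∀ {x : ℕ → M}, (∀ i, x (i + 1) ≤ x i ^ p) → ∀ {k : ℕ}, k + 1 < p ^ N →
      digitProd p x N (k + 1) ≤ x 0 * digitProd p x N k := by
  induction N with
  | zero => intro x _ k hk; simp at hk
  | succ N ih =>
    intro x hx k hk
    have hp : 0 < p := Nat.pos_of_ne_zero (by rintro rfl; simp at hk)
    obtain ⟨r, q, hr, rfl⟩ : ∃ r q, r < p ∧ k = r + p * q :=
      ⟨k % p, k / p, Nat.mod_lt k hp, (Nat.mod_add_div k p).symm⟩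
    rw [digitProd_succ_add_mul x N hr]
    rcases Nat.lt_or_ge (r + 1) p with hr1 | hr1
    · rw [show r + p * q + 1 = (r + 1) + p * q by omega, digitProd_succ_add_mul x N hr1, pow_succ',
        mul_assoc]
    · -- the lowest digit carries over into the next one
      have hr' : r + 1 = p := by omega
      have hq : q + 1 < p ^ N := by
        rw [pow_succ'] at hk
        nlinarith
      rw [show r + p * q + 1 = 0 + p * (q + 1) by rw [← hr']; ring,
        digitProd_succ_add_mul x N hp, pow_zero, one_mul]
      calc digitProd p (fun i => x (i + 1)) N (q + 1)
          ≤ x 1 * digitProd p (fun i => x (i + 1)) N q := ih (fun i => hx (i + 1)) hq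
        _ ≤ x 0 ^ p * digitProd p (fun i => x (i + 1)) N q := by gcongr; exact hx 0
        _ = x 0 * (x 0 ^ r * digitProd p (fun i => x (i + 1)) N q) := by
          rw [← hr', pow_succ', mul_assoc]

end

theorem bracketPow_mul_le {R : Type*} [CommRing R] (a : Ideal R) (m n : ℕ) :
    bracketPow a (m * n) ≤ bracketPow a m ^ n := by
  rw [bracketPow, Ideal.span_le]
  rintro _ ⟨x, hx, rfl⟩
  show x ^ (m * n) ∈ bracketPow a m ^ n
  rw [pow_mul]
  exact Ideal.pow_mem_pow (Ideal.subset_span (Set.mem_image_of_mem _ hx)) n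

theorem stmt_5_general {R : Type*} [CommRing R] (p : ℕ) (hp : p.Prime)
    (a : Ideal R) (k l : ℕ) (hkl : k > l) :
    frobPow p a k ≤ frobPow p a l := by
  refine antitone_nat_of_succ_le (fun m => ?_) hkl.le
  have hbracket : ∀ i, bracketPow a (p ^ (i + 1)) ≤ bracketPow a (p ^ i) ^ p := fun i => by
    simpa only [pow_succ] using bracketPow_mul_le a (p ^ i) p
  have hm : m + 1 < p ^ (m + 2) :=
    Nat.lt_pow_self hp.one_lt |>.trans (Nat.pow_lt_pow_right hp.one_lt (by omega))
  calc frobPow p a (m + 1)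
      ≤ bracketPow a (p ^ 0) * digitProd p (fun i => bracketPow a (p ^ i)) (m + 2) m :=
        digitProd_succ_le hbracket hm
    _ ≤ digitProd p (fun i => bracketPow a (p ^ i)) (m + 2) m := Ideal.mul_le_right
    _ = frobPow p a m :=
        digitProd_eq_of_lt_pow _ hp.pos (by omega)
          ((Nat.lt_pow_self hp.one_lt).trans (Nat.pow_lt_pow_right hp.one_lt m.lt_succ_self))

theorem stmt_5 {R : Type*} [CommRing R] (p : ℕ) (hp : p.Prime) [CharP R p]
    (a : Ideal R) (k l : ℕ) (hkl : k > l) :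
    frobPow p a k ≤ frobPow p a l :=
  stmt_5_general p hp a k l hkl
end

section
/- Let R be a commutative ring of prime characteristic p, 𝔞 an ideal of R, and k, l ∈ ℕ. Then 𝔞^[kl] ⊆ (𝔞^[k])^[l] = (𝔞^[l])^[k], and the containment is an equality if one of k and l is a power of p. -/
open scoped BigOperators

/-!
Write `F` for the Frobenius endomorphism, so that `𝔞^[pᵉ] = Fᵉ(𝔞)`. Unwinding the base-`p` digits
gives the recursion `𝔞^[n] = 𝔞^(n % p) · F(𝔞^[n / p])`. Since `F(𝔞) ⊆ 𝔞^p`, resolving a carry in a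
sum of digits can only shrink the corresponding product, whence `𝔞^[m + n] ⊆ 𝔞^[m] 𝔞^[n]`; together
with the recursion this yields `𝔞^[kl] ⊆ (𝔞^[k])^[l]` by strong induction on `l`. Expanding
`(𝔞^[k])^[l]` as `∏ᵢ ∏ⱼ F^(i+j)(𝔞)^(lᵢ kⱼ)` shows the symmetry in `k` and `l`, and when one factor
is `pᵉ` both sides equal `Fᵉ` applied to the other Frobenius power.
-/

open Finset

theorem map_frobenius_le_pow {R : Type*} [CommSemiring R] {p : ℕ} [ExpChar R p] (a : Ideal R) :
    a.map (frobenius R p) ≤ a ^ p :=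
  Ideal.map_le_iff_le_comap.2 fun _ hx => Ideal.pow_mem_pow hx p

theorem frobPow_zero {R : Type*} [CommRing R] {p : ℕ} (a : Ideal R) : frobPow p a 0 = 1 := by
  simp [frobPow]

section ExpChar

variable {R : Type*} [CommRing R] {p : ℕ} [ExpChar R p]

theorem bracketPow_prime_pow (a : Ideal R) (e : ℕ) :
    bracketPow a (p ^ e) = a.map (iterateFrobenius R p e) := by
  conv_rhs => rw [← Ideal.span_eq a]
  rw [Ideal.map_span]
  rfl

theorem map_iterateFrobenius_map_iterateFrobenius (a : Ideal R) (m n : ℕ) :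
    (a.map (iterateFrobenius R p n)).map (iterateFrobenius R p m) =
      a.map (iterateFrobenius R p (m + n)) := by
  rw [Ideal.map_map, iterateFrobenius_add]

theorem frobPow_map_iterateFrobenius (a : Ideal R) (e n : ℕ) :
    frobPow p (a.map (iterateFrobenius R p e)) n =
      (frobPow p a n).map (iterateFrobenius R p e) := by
  simp_rw [frobPow, ← Ideal.mapHom_apply (iterateFrobenius R p e), map_prod, map_pow,
    Ideal.mapHom_apply, bracketPow_prime_pow, map_iterateFrobenius_map_iterateFrobenius, add_comm]

theorem frobPow_frobPow_eq_prod (a : Ideal R) (k l : ℕ) :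
    frobPow p (frobPow p a k) l = ∏ i ∈ range (l + 1), ∏ j ∈ range (k + 1),
      a.map (iterateFrobenius R p (i + j)) ^ (l / p ^ i % p * (k / p ^ j % p)) := by
  refine prod_congr rfl fun i _ => ?_
  rw [bracketPow_prime_pow, ← frobPow_map_iterateFrobenius, frobPow, ← prod_pow]
  refine prod_congr rfl fun j _ => ?_
  rw [bracketPow_prime_pow, map_iterateFrobenius_map_iterateFrobenius, add_comm j, ← pow_mul, mul_comm]

theorem frobPow_frobPow_comm (a : Ideal R) (k l : ℕ) :
    frobPow p (frobPow p a k) l = frobPow p (frobPow p a l) k := by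
  rw [frobPow_frobPow_eq_prod, frobPow_frobPow_eq_prod, prod_comm]
  exact prod_congr rfl fun j _ => prod_congr rfl fun i _ => by rw [add_comm, mul_comm]

end ExpChar

section FrobeniusPower

variable {R : Type*} [CommRing R] {p : ℕ} [Fact p.Prime] [CharP R p]

theorem frobPow_eq_prod_range (a : Ideal R) {n N : ℕ} (hN : n ≤ N) :
    frobPow p a n = ∏ i ∈ range N, a.map (iterateFrobenius R p i) ^ (n / p ^ i % p) := by
  have hp := (Fact.out : p.Prime).one_lt
  -- digits of index `i ≥ n` vanish because `n < p ^ n`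
  have hstable : ∀ M, n ≤ M → ∏ i ∈ range M, a.map (iterateFrobenius R p i) ^ (n / p ^ i % p) =
      ∏ i ∈ range n, a.map (iterateFrobenius R p i) ^ (n / p ^ i % p) := fun M hM => by
    refine (prod_subset (range_subset_range.2 hM) fun i _ hi => ?_).symm
    have hni : n < p ^ i :=
      (Nat.lt_pow_self hp).trans_le (Nat.pow_le_pow_right hp.le (by simpa using hi))
    rw [Nat.div_eq_of_lt hni, Nat.zero_mod, pow_zero]
  simp_rw [frobPow, bracketPow_prime_pow]
  rw [hstable _ n.le_succ, hstable _ hN]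

theorem frobPow_eq_pow_mul_map (a : Ideal R) (n : ℕ) :
    frobPow p a n = a ^ (n % p) * (frobPow p a (n / p)).map (frobenius R p) := by
  rw [frobPow_eq_prod_range a n.le_succ, prod_range_succ', mul_comm,
    frobPow_eq_prod_range a (Nat.div_le_self n p), ← Ideal.mapHom_apply (frobenius R p), map_prod]
  congr 1
  · simp
  · refine prod_congr rfl fun i _ => ?_
    rw [Ideal.mapHom_apply, Ideal.map_pow, ← iterateFrobenius_one,
      map_iterateFrobenius_map_iterateFrobenius, add_comm 1 i, Nat.div_div_eq_div_mul, ← pow_succ']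

theorem frobPow_of_lt (a : Ideal R) {n : ℕ} (hn : n < p) : frobPow p a n = a ^ n := by
  rw [frobPow_eq_pow_mul_map, Nat.mod_eq_of_lt hn, Nat.div_eq_of_lt hn, frobPow_zero,
    Ideal.one_eq_top, Ideal.map_top, ← Ideal.one_eq_top, mul_one]

theorem frobPow_one (a : Ideal R) : frobPow p a 1 = a := by
  simpa using frobPow_of_lt a (Fact.out : p.Prime).one_lt

theorem frobPow_mul_prime (a : Ideal R) (n : ℕ) :
    frobPow p a (n * p) = (frobPow p a n).map (frobenius R p) := by
  have hp := (Fact.out : p.Prime).pos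
  rw [frobPow_eq_pow_mul_map, Nat.mul_mod_left, Nat.mul_div_cancel _ hp, pow_zero, one_mul]

theorem frobPow_mul_prime_pow (a : Ideal R) (n e : ℕ) :
    frobPow p a (n * p ^ e) = (frobPow p a n).map (iterateFrobenius R p e) := by
  induction e with
  | zero => simp [iterateFrobenius_zero]
  | succ e ih =>
    rw [pow_succ, ← mul_assoc, frobPow_mul_prime, ih, ← iterateFrobenius_one,
      map_iterateFrobenius_map_iterateFrobenius, add_comm]

theorem frobPow_prime_pow (a : Ideal R) (e : ℕ) :
    frobPow p a (p ^ e) = a.map (iterateFrobenius R p e) := by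
  simpa [frobPow_one] using frobPow_mul_prime_pow a 1 e

theorem frobPow_add_le (a : Ideal R) (m n : ℕ) :
    frobPow p a (m + n) ≤ frobPow p a m * frobPow p a n := by
  have hp := (Fact.out : p.Prime).one_lt
  induction hs : m + n using Nat.strong_induction_on generalizing m n with
  | _ s ih =>
  subst hs
  rcases Nat.eq_zero_or_pos (m + n) with hzero | hpos
  · obtain ⟨rfl, rfl⟩ : m = 0 ∧ n = 0 := by omega
    simp [frobPow_zero]
  have hq : (m + n) / p < m + n := Nat.div_lt_self hpos hp
  have hprod : frobPow p a m * frobPow p a n =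
      a ^ (m % p + n % p) * (frobPow p a (m / p) * frobPow p a (n / p)).map (frobenius R p) := by
    rw [frobPow_eq_pow_mul_map a m, frobPow_eq_pow_mul_map a n, Ideal.map_mul, pow_add]
    ring
  rw [hprod, frobPow_eq_pow_mul_map a (m + n)]
  by_cases hcarry : m % p + n % p < p
  · rw [Nat.add_div_eq_of_add_mod_lt hcarry] at hq ⊢
    rw [Nat.add_mod_of_add_mod_lt hcarry]
    exact Ideal.mul_mono_right (Ideal.map_mono (ih _ hq _ _ rfl))
  · push Not at hcarry
    rw [Nat.add_div_eq_of_le_mod_add_mod hcarry (by omega)] at hq ⊢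
    rw [← Nat.add_mod_add_of_le_add_mod hcarry]
    calc a ^ ((m + n) % p) * (frobPow p a (m / p + n / p + 1)).map (frobenius R p)
        ≤ a ^ ((m + n) % p) * (frobPow p a (m / p + n / p) * a).map (frobenius R p) := by
          grw [ih _ hq (m / p + n / p) 1 rfl, frobPow_one]
      _ ≤ a ^ ((m + n) % p + p) * (frobPow p a (m / p + n / p)).map (frobenius R p) := by
          grw [Ideal.map_mul, map_frobenius_le_pow a, pow_add]
          rw [mul_comm _ (a ^ p), mul_assoc]
      _ ≤ _ := Ideal.mul_mono_right (Ideal.map_mono (ih _ (by omega) _ _ rfl))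

theorem frobPow_mul_le_pow (a : Ideal R) (k r : ℕ) : frobPow p a (k * r) ≤ frobPow p a k ^ r := by
  induction r with
  | zero => simp [frobPow_zero]
  | succ r ih =>
    rw [mul_add_one, pow_succ]
    exact (frobPow_add_le a _ _).trans (Ideal.mul_mono_left ih)

theorem frobPow_mul_le_frobPow_frobPow (a : Ideal R) (k l : ℕ) :
    frobPow p a (k * l) ≤ frobPow p (frobPow p a k) l := by
  have hp := (Fact.out : p.Prime).one_lt
  induction l using Nat.strong_induction_on with
  | _ l ih =>
  rcases Nat.eq_zero_or_pos l with rfl | hl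
  · simp [frobPow_zero]
  calc frobPow p a (k * l) = frobPow p a (k * (l % p) + k * (l / p) * p) := by
        rw [mul_assoc, ← mul_add, mul_comm (l / p), Nat.mod_add_div]
    _ ≤ frobPow p a (k * (l % p)) * (frobPow p a (k * (l / p))).map (frobenius R p) := by
        rw [← frobPow_mul_prime]
        exact frobPow_add_le a _ _
    _ ≤ frobPow p a k ^ (l % p) * (frobPow p (frobPow p a k) (l / p)).map (frobenius R p) :=
        Ideal.mul_mono (frobPow_mul_le_pow a k _)
          (Ideal.map_mono (ih _ (Nat.div_lt_self hl hp)))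
    _ = frobPow p (frobPow p a k) l := (frobPow_eq_pow_mul_map _ l).symm

end FrobeniusPower

theorem stmt_6 {R : Type*} [CommRing R] (p : ℕ) (hp : p.Prime) [CharP R p]
    (a : Ideal R) (k l : ℕ) :
    frobPow p a (k * l) ≤ frobPow p (frobPow p a k) l ∧
      frobPow p (frobPow p a k) l = frobPow p (frobPow p a l) k ∧
      (((∃ e, k = p ^ e) ∨ (∃ e, l = p ^ e)) →
        frobPow p a (k * l) = frobPow p (frobPow p a k) l) := by
  have : Fact p.Prime := ⟨hp⟩
  refine ⟨frobPow_mul_le_frobPow_frobPow a k l, frobPow_frobPow_comm a k l, ?_⟩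
  rintro (⟨e, rfl⟩ | ⟨e, rfl⟩)
  · rw [frobPow_prime_pow, frobPow_map_iterateFrobenius, mul_comm, frobPow_mul_prime_pow]
  · rw [frobPow_mul_prime_pow, frobPow_prime_pow]
end

section
/- Let R be a regular F-finite domain of prime characteristic p, and let 𝔞 and 𝔟 be ideals of R. Then for every power q of p, the ideal (𝔞 · 𝔟^[q])^[1/q] equals 𝔞^[1/q] · 𝔟, where for an ideal 𝔠, 𝔠^[1/q] is the smallest ideal 𝔡 such that 𝔠 ⊆ 𝔡^[q]. -/
/-!
The `e`-th Frobenius `F^e` is flat and finite, so over a Noetherian ring `R` is a projective module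
over itself through `F^e`; extension of ideals along `F^e`, which is `𝔡 ↦ 𝔡^[q]`, then commutes with
arbitrary intersections and with colons `(𝔡 : y)`. Intersections make `𝔠 ↦ 𝔠^[1/q]` left adjoint
to `𝔡 ↦ 𝔡^[q]`, so `(𝔞 𝔟^[q])^[1/q] ⊆ 𝔞^[1/q] 𝔟` follows from
`𝔞 𝔟^[q] ⊆ (𝔞^[1/q])^[q] 𝔟^[q] = (𝔞^[1/q] 𝔟)^[q]`. Conversely, if `𝔞 𝔟^[q] ⊆ 𝔡^[q]` and `y ∈ 𝔟`,
then `𝔞 ⊆ (𝔡^[q] : y^q) = (𝔡 : y)^[q]`, hence `𝔞^[1/q] ⊆ (𝔡 : y)`, i.e. `𝔞^[1/q] y ⊆ 𝔡`.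
-/

open scoped BigOperators

/-- The `q`-th Frobenius root `𝔠^[1/q]`: the smallest ideal `𝔡` with `𝔠 ⊆ 𝔡^[q]`.
(Over a regular F-finite domain the infimum below is itself such an ideal, by
flatness of Frobenius, so it is indeed the smallest one.) -/
def frobRoot {R : Type*} [CommRing R] (q : ℕ) (c : Ideal R) : Ideal R :=
  sInf {d : Ideal R | c ≤ bracketPow d q}

namespace Ideal

variable {R S : Type*} [CommRing R] [CommRing S]

theorem apply_mem_of_mem_smul_top {M : Type*} [AddCommGroup M] [Module R M] (g : M →ₗ[R] R)
    {I : Ideal R} {x : M} (hx : x ∈ I • (⊤ : Submodule R M)) : g x ∈ I := by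
  refine Submodule.smul_induction_on hx (fun r hr m _ => ?_) fun x y hx hy => ?_
  · simpa only [map_smul, smul_eq_mul] using I.mul_mem_right (g m) hr
  · simpa only [map_add] using I.add_mem hx hy

/-- The coordinates of `x ∈ ⨅ I ∈ T, I S` with respect to a splitting `S → R^(S)` lie in
every `I ∈ T`, hence in `sInf T`. -/
theorem map_sInf_of_projective [Algebra R S] [Module.Projective R S] (T : Set (Ideal R)) :
    map (algebraMap R S) (sInf T) = ⨅ I ∈ T, map (algebraMap R S) I := by
  refine le_antisymm (le_iInf₂ fun I hI => map_mono (sInf_le hI)) fun x hx => ?_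
  obtain ⟨s, hs⟩ := Module.projective_def'.mp (inferInstance : Module.Projective R S)
  have hmem : ∀ I ∈ T, x ∈ I • (⊤ : Submodule R S) := fun I hI => by
    simpa only [smul_top_eq_map, Submodule.restrictScalars_mem] using
      (Submodule.mem_iInf _).mp ((Submodule.mem_iInf _).mp hx I) hI
  rw [← Submodule.restrictScalars_mem R, ← smul_top_eq_map,
    ← show Finsupp.linearCombination R id (s x) = x from LinearMap.congr_fun hs x,
    Finsupp.linearCombination_apply]
  refine Submodule.sum_mem _ fun m _ => Submodule.smul_mem_smul ?_ Submodule.mem_top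
  exact mem_sInf.mpr fun I hI =>
    apply_mem_of_mem_smul_top ((Finsupp.lapply m).comp s) (hmem _ hI)

theorem map_sInf_of_flat_of_finite [IsNoetherianRing R] {f : R →+* S} (hfl : f.Flat)
    (hfin : f.Finite) (T : Set (Ideal R)) : map f (sInf T) = ⨅ I ∈ T, map f I := by
  let := f.toAlgebra
  have : Module.Flat R S := hfl
  have : Module.Finite R S := hfin
  have := Module.finitePresentation_of_finite R S
  have := Module.Flat.projective_of_finitePresentation (R := R) (M := S)
  exact map_sInf_of_projective T

theorem map_inf_of_flat_of_finite [IsNoetherianRing R] {f : R →+* S} (hfl : f.Flat)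
    (hfin : f.Finite) (c d : Ideal R) : map f (c ⊓ d) = map f c ⊓ map f d := by
  rw [← sInf_pair, map_sInf_of_flat_of_finite hfl hfin, iInf_pair]

theorem span_singleton_mul_colon_singleton (c : Ideal R) (y : R) :
    span {y} * c.colon {y} = c ⊓ span {y} := by
  refine le_antisymm (fun z hz => ?_) fun z ⟨hzc, hzy⟩ => ?_
  · obtain ⟨w, hw, rfl⟩ := mem_span_singleton_mul.mp hz
    rw [Submodule.mem_colon_singleton, smul_eq_mul, mul_comm] at hw
    exact ⟨hw, mul_mem_right w _ (mem_span_singleton_self y)⟩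
  · obtain ⟨w, rfl⟩ := mem_span_singleton'.mp hzy
    exact mem_span_singleton_mul.mpr ⟨w, Submodule.mem_colon_singleton.mpr hzc, mul_comm y w⟩

/-- In a domain `(c : y)` is recovered from `y (c : y) = c ∩ (y)` by cancelling `y`, so only
intersections have to commute with `map f`. -/
theorem map_colon_singleton_of_flat_of_finite [IsNoetherianRing R] [IsDomain S] {f : R →+* S}
    (hfl : f.Flat) (hfin : f.Finite) (c : Ideal R) {y : R} (hy : f y ≠ 0) :
    map f (c.colon {y}) = (map f c).colon {f y} := by
  have hspan : map f (span {y}) = span {f y} := by rw [map_span, Set.image_singleton]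
  rw [← span_singleton_mul_right_inj hy, span_singleton_mul_colon_singleton, ← hspan,
    ← Ideal.map_mul, span_singleton_mul_colon_singleton, map_inf_of_flat_of_finite hfl hfin]

end Ideal

theorem bracketPow_mono {R : Type*} [CommRing R] {c d : Ideal R} (h : c ≤ d) (q : ℕ) :
    bracketPow c q ≤ bracketPow d q :=
  Ideal.span_mono (Set.image_mono h)

section Frobenius

variable {R : Type*} [CommRing R] (p : ℕ) [ExpChar R p]

theorem bracketPow_eq_map_iterateFrobenius (c : Ideal R) (e : ℕ) :
    bracketPow c (p ^ e) = c.map (iterateFrobenius R p e) := rfl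

theorem bracketPow_mul (c d : Ideal R) (e : ℕ) :
    bracketPow (c * d) (p ^ e) = bracketPow c (p ^ e) * bracketPow d (p ^ e) := by
  simp only [bracketPow_eq_map_iterateFrobenius, Ideal.map_mul]

theorem iterateFrobenius_flat (hfl : (frobenius R p).Flat) (e : ℕ) :
    (iterateFrobenius R p e).Flat := by
  induction e with
  | zero => exact iterateFrobenius_zero (R := R) p ▸ RingHom.Flat.id R
  | succ n ih =>
    rw [add_comm, iterateFrobenius_add, iterateFrobenius_one]
    exact RingHom.Flat.comp ih hfl

theorem iterateFrobenius_finite (hfin : (frobenius R p).Finite) (e : ℕ) :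
    (iterateFrobenius R p e).Finite := by
  induction e with
  | zero => exact iterateFrobenius_zero (R := R) p ▸ RingHom.Finite.id R
  | succ n ih =>
    rw [add_comm, iterateFrobenius_add, iterateFrobenius_one]
    exact hfin.comp ih

end Frobenius

section FrobeniusRoot

variable {R : Type*} [CommRing R] [IsNoetherianRing R] (p : ℕ) [ExpChar R p]

/-- Flatness and finiteness of Frobenius make the infimum defining `frobRoot` attained. -/
theorem gc_frobRoot_bracketPow (hfl : (frobenius R p).Flat) (hfin : (frobenius R p).Finite)
    (e : ℕ) : GaloisConnection (frobRoot (R := R) (p ^ e)) (bracketPow · (p ^ e)) := by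
  refine fun c d => ⟨fun h => le_trans ?_ (bracketPow_mono h _), fun h => sInf_le h⟩
  rw [bracketPow_eq_map_iterateFrobenius, frobRoot,
    Ideal.map_sInf_of_flat_of_finite (iterateFrobenius_flat p hfl e)
      (iterateFrobenius_finite p hfin e)]
  exact le_iInf₂ fun d hd => hd

theorem bracketPow_colon_singleton [IsDomain R] (hfl : (frobenius R p).Flat)
    (hfin : (frobenius R p).Finite) (e : ℕ) (d : Ideal R) {y : R} (hy : y ≠ 0) :
    bracketPow (d.colon {y}) (p ^ e) = (bracketPow d (p ^ e)).colon {y ^ p ^ e} := by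
  rw [bracketPow_eq_map_iterateFrobenius, bracketPow_eq_map_iterateFrobenius,
    Ideal.map_colon_singleton_of_flat_of_finite (iterateFrobenius_flat p hfl e)
      (iterateFrobenius_finite p hfin e) d
      (by rw [iterateFrobenius_def]; exact pow_ne_zero _ hy),
    iterateFrobenius_def]

theorem frobRoot_mul_le_of_mul_bracketPow_le [IsDomain R] (hfl : (frobenius R p).Flat)
    (hfin : (frobenius R p).Finite) (e : ℕ) {a b d : Ideal R}
    (h : a * bracketPow b (p ^ e) ≤ bracketPow d (p ^ e)) : frobRoot (p ^ e) a * b ≤ d := by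
  refine Ideal.mul_le.mpr fun x hx y hy => ?_
  rcases eq_or_ne y 0 with rfl | hy0
  · simp
  suffices frobRoot (p ^ e) a ≤ d.colon {y} by
    simpa only [Submodule.mem_colon_singleton, smul_eq_mul] using this hx
  rw [(gc_frobRoot_bracketPow p hfl hfin e).le_iff_le,
    bracketPow_colon_singleton p hfl hfin e d hy0]
  intro z hz
  exact Submodule.mem_colon_singleton.mpr
    (h (Ideal.mul_mem_mul hz (Ideal.subset_span ⟨y, hy, rfl⟩)))

end FrobeniusRoot

/-- Over a regular F-finite domain (regularity encoded, via Kunz's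
theorem, by flatness of the Frobenius, and F-finiteness by its finiteness),
`(𝔞 · 𝔟^[q])^[1/q] = 𝔞^[1/q] · 𝔟` for every power `q` of `p`. -/
theorem stmt_12 {R : Type*} [CommRing R] [IsDomain R] [IsNoetherianRing R]
    (p : ℕ) [Fact p.Prime] [CharP R p]
    (hFfin : (frobenius R p).Finite) (hreg : (frobenius R p).Flat)
    (a b : Ideal R) (e : ℕ) :
    frobRoot (p ^ e) (a * bracketPow b (p ^ e)) = frobRoot (p ^ e) a * b := by
  have gc := gc_frobRoot_bracketPow p hreg hFfin e
  refine le_antisymm (gc.l_le ?_)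
    (frobRoot_mul_le_of_mul_bracketPow_le p hreg hFfin e (gc.le_u_l _))
  rw [bracketPow_mul]
  exact Ideal.mul_mono_left (gc.le_u_l a)
end

section
/- Let R be a regular F-finite domain of prime characteristic p, and let 𝔞 ⊆ 𝔟 be nonzero proper ideals with 𝔞 ⊆ √𝔟. For q a power of p, let μ(q) = max{k ∈ ℕ : 𝔞^[k] ⊄ 𝔟^[q]} and ν(q) = max{k ∈ ℕ : 𝔞^k ⊄ 𝔟^[q]}. Then μ(p) = min{ν(p), p − 1}. -/
/-!
Below `p` the generalized Frobenius power is the ordinary power, `𝔞^[k] = 𝔞^k`, while from `p`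
on the leading base-`p` digit of `k` contributes a factor `𝔞^[p^i] ⊆ 𝔟^[p]` with `i ≥ 1`. Hence
`{k | 𝔞^[k] ⊄ 𝔟^[p]} = {k | 𝔞^k ⊄ 𝔟^[p]} ∩ [0, p - 1]`, and the second set is an initial segment
of `ℕ`, finite because `𝔞 ⊆ 𝔟 ⊆ √(𝔟^[p])` and `𝔞` is finitely generated.
-/

open scoped BigOperators

theorem Nat.sSup_inter_Iic_of_isLowerSet {T : Set ℕ} (hT : IsLowerSet T) (hbdd : BddAbove T)
    (n : ℕ) : sSup (T ∩ Set.Iic n) = min (sSup T) n := by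
  rcases T.eq_empty_or_nonempty with rfl | hne
  · simp
  have hT_eq : T = Set.Iic (sSup T) :=
    Set.ext fun k => ⟨fun hk => le_csSup hbdd hk, fun hk => hT hk (Nat.sSup_mem hne hbdd)⟩
  rw [hT_eq, Set.Iic_inter_Iic, csSup_Iic, ← hT_eq]

section BracketPow

variable {R : Type*} [CommRing R]

theorem bracketPow_le_bracketPow_of_dvd {a b : Ideal R} (hab : a ≤ b) {q q' : ℕ}
    (hq : q ∣ q') (hq' : q' ≠ 0) : bracketPow a q' ≤ bracketPow b q := by
  obtain ⟨c, rfl⟩ := hq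
  rw [bracketPow, Ideal.span_le]
  rintro _ ⟨x, hx, rfl⟩
  have hxc : x ^ c ∈ b :=
    Ideal.pow_mem_of_mem b (hab hx) c (Nat.pos_of_ne_zero (right_ne_zero_of_mul hq'))
  show x ^ (q * c) ∈ bracketPow b q
  rw [mul_comm, pow_mul]
  exact Ideal.subset_span ⟨x ^ c, hxc, rfl⟩

theorem le_radical_bracketPow (b : Ideal R) (q : ℕ) : b ≤ (bracketPow b q).radical :=
  fun x hx => ⟨q, Ideal.subset_span ⟨x, hx, rfl⟩⟩

theorem frobPow_eq_pow_of_lt (p : ℕ) (a : Ideal R) {k : ℕ} (hk : k < p) :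
    frobPow p a k = a ^ k := by
  rw [frobPow, Finset.prod_eq_single 0]
  · simp [bracketPow, Nat.mod_eq_of_lt hk]
  · intro i _ hi
    rw [Nat.div_eq_of_lt (hk.trans_le (Nat.le_self_pow hi p))]
    simp
  · simp

theorem frobPow_le_bracketPow {p : ℕ} (hp : 1 < p) {a b : Ideal R} (hab : a ≤ b) {k : ℕ}
    (hk : p ≤ k) : frobPow p a k ≤ bracketPow b p := by
  set i := Nat.log p k
  have hi : 1 ≤ i := Nat.log_pos hp hk
  have hpos : 0 < p ^ i := by positivity
  have hdigit_pos : 0 < k / p ^ i :=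
    Nat.div_pos (Nat.pow_log_le_self p (by omega)) hpos
  have hdigit_lt : k / p ^ i < p := by
    rw [Nat.div_lt_iff_lt_mul hpos, ← pow_succ']
    exact Nat.lt_pow_succ_log_self hp k
  have hi_mem : i ∈ Finset.range (k + 1) := Finset.mem_range.mpr <|
    Nat.lt_succ_of_le ((Nat.lt_pow_self hp).le.trans (Nat.pow_log_le_self p (by omega)))
  calc frobPow p a k ≤ bracketPow a (p ^ i) ^ (k / p ^ i % p) :=
        Ideal.prod_le_inf.trans (Finset.inf_le hi_mem)
    _ ≤ bracketPow a (p ^ i) := Ideal.pow_le_self (by rw [Nat.mod_eq_of_lt hdigit_lt]; omega)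
    _ ≤ bracketPow b p :=
        bracketPow_le_bracketPow_of_dvd hab (dvd_pow_self p (by omega)) hpos.ne'

end BracketPow

theorem Ideal.isLowerSet_setOf_not_pow_le {R : Type*} [CommSemiring R] (a c : Ideal R) :
    IsLowerSet {k : ℕ | ¬ a ^ k ≤ c} :=
  fun _ _ hkl hk hl => hk ((Ideal.pow_le_pow_right hkl).trans hl)

theorem Ideal.bddAbove_setOf_not_pow_le {R : Type*} [CommSemiring R] {a c : Ideal R}
    (ha : a.FG) (hac : a ≤ c.radical) : BddAbove {k : ℕ | ¬ a ^ k ≤ c} := by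
  obtain ⟨n, hn⟩ := Ideal.exists_pow_le_of_le_radical_of_fg hac ha
  exact ⟨n, fun k hk => not_lt.mp fun hnk => hk ((Ideal.pow_le_pow_right hnk.le).trans hn)⟩

theorem stmt_17_general {R : Type*} [CommRing R] [IsNoetherianRing R]
    (p : ℕ) [Fact p.Prime]
    (a b : Ideal R)
    (hab : a ≤ b) :
    sSup {k : ℕ | ¬ frobPow p a k ≤ bracketPow b p} =
      min (sSup {k : ℕ | ¬ a ^ k ≤ bracketPow b p}) (p - 1) := by
  have hp : 1 < p := (Fact.out : p.Prime).one_lt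
  have hfrob : {k : ℕ | ¬ frobPow p a k ≤ bracketPow b p} =
      {k : ℕ | ¬ a ^ k ≤ bracketPow b p} ∩ Set.Iic (p - 1) := by
    ext k
    rcases lt_or_ge k p with hk | hk
    · simp only [Set.mem_ofPred_eq, Set.mem_inter_iff, Set.mem_Iic, frobPow_eq_pow_of_lt p a hk,
        iff_self_and]
      omega
    · simp only [Set.mem_ofPred_eq, Set.mem_inter_iff, Set.mem_Iic,
        frobPow_le_bracketPow hp hab hk, not_true_eq_false, false_iff, not_and, not_le]
      omega
  rw [hfrob]
  exact Nat.sSup_inter_Iic_of_isLowerSet (Ideal.isLowerSet_setOf_not_pow_le _ _)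
    (Ideal.bddAbove_setOf_not_pow_le (IsNoetherian.noetherian a)
      (hab.trans (le_radical_bracketPow b p))) (p - 1)

/-- With `μ(q) = max{k : 𝔞^[k] ⊄ 𝔟^[q]}` and
`ν(q) = max{k : 𝔞^k ⊄ 𝔟^[q]}`, one has `μ(p) = min(ν(p), p − 1)`. -/
theorem stmt_17 {R : Type*} [CommRing R] [IsDomain R] [IsNoetherianRing R]
    (p : ℕ) [Fact p.Prime] [CharP R p]
    (hFfin : (frobenius R p).Finite) (hreg : (frobenius R p).Flat)
    (a b : Ideal R) (ha0 : a ≠ ⊥) (hb0 : b ≠ ⊥) (haT : a ≠ ⊤) (hbT : b ≠ ⊤)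
    (hab : a ≤ b) (hrad : a ≤ b.radical) :
    sSup {k : ℕ | ¬ frobPow p a k ≤ bracketPow b p} =
      min (sSup {k : ℕ | ¬ a ^ k ≤ bracketPow b p}) (p - 1) :=
  stmt_17_general p a b hab
end
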